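/- Let d ≥ 1 and J ≥ 1, let x_1, …, x_J ∈ ℝ^d, Θ = {θ ∈ ℝ^d : x_j^⊤θ ≥ 0 for all j ∈ [J]}, ρ ≥ 0, μ̂ ∈ ℝ^d, and Σ̂ ∈ ℝ^{d×d} symmetric positive definite. If μ̂ ∉ Θ, then the worst-case lower bound on the probability of validity is trivial: inf_{Q ∈ 𝔹} Q(θ̃ ∈ Θ) = 0, where 𝔹 is the set of Borel probability measures Q on ℝ^d whose mean vector μ and covariance matrix Σ exist and satisfy 𝔾((μ, Σ), (μ̂, Σ̂)) ≤ ρ. Consequently, the semidefinite-programming lower bound L⋆ of Theorem 1 (which is dominated by this infimum) equals 0. -/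

import Mathlib

open MeasureTheory Matrix Classical

noncomputable section

/-- Positive semidefinite square root of a matrix (junk value `0` if not PSD). -/
noncomputable def matSqrt {d : ℕ} (A : Matrix (Fin d) (Fin d) ℝ) : Matrix (Fin d) (Fin d) ℝ :=
  if h : A.PosSemidef then
    (h.1.eigenvectorUnitary : Matrix (Fin d) (Fin d) ℝ) *
      diagonal ((↑) ∘ (√·) ∘ h.1.eigenvalues) *
      (star h.1.eigenvectorUnitary : Matrix (Fin d) (Fin d) ℝ)
  else 0

/-- Euclidean norm on `Fin d → ℝ`. -/
noncomputable def euclNorm {d : ℕ} (v : Fin d → ℝ) : ℝ := Real.sqrt (∑ i, (v i) ^ 2)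

/-- Gelbrich distance between two mean–covariance pairs. -/
noncomputable def gelbrich {d : ℕ} (μ₁ : Fin d → ℝ) (S₁ : Matrix (Fin d) (Fin d) ℝ)
    (μ₂ : Fin d → ℝ) (S₂ : Matrix (Fin d) (Fin d) ℝ) : ℝ :=
  Real.sqrt ((∑ i, (μ₁ i - μ₂ i) ^ 2) +
    (S₁ + S₂ - (2 : ℝ) • matSqrt (matSqrt S₂ * S₁ * matSqrt S₂)).trace)

/-- The symmetric block matrix `[[Z, z], [zᵀ, c]]`. -/
def blk {d : ℕ} (Z : Matrix (Fin d) (Fin d) ℝ) (z : Fin d → ℝ) (c : ℝ) :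
    Matrix (Fin d ⊕ Unit) (Fin d ⊕ Unit) ℝ :=
  Matrix.of fun p q =>
    match p, q with
    | Sum.inl i, Sum.inl j => Z i j
    | Sum.inl i, Sum.inr _ => z i
    | Sum.inr _, Sum.inl j => z j
    | Sum.inr _, Sum.inr _ => c

/-- The block matrix `[[A, B], [C, D]]` with four `d × d` blocks. -/
def blk2 {d : ℕ} (A B C D : Matrix (Fin d) (Fin d) ℝ) :
    Matrix (Fin d ⊕ Fin d) (Fin d ⊕ Fin d) ℝ :=
  Matrix.fromBlocks A B C D

/-- Set of favorable parameters `Θ({x_j}) = {θ : x_jᵀθ ≥ 0 ∀ j}`. -/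
def favSet {d J : ℕ} (x : Fin J → Fin d → ℝ) : Set (Fin d → ℝ) :=
  { θ | ∀ j, 0 ≤ x j ⬝ᵥ θ }

/-- `Q` has mean vector `μ`: every coordinate is integrable with the prescribed integral. -/
def hasMean {d : ℕ} (Q : Measure (Fin d → ℝ)) (μ : Fin d → ℝ) : Prop :=
  ∀ i, Integrable (fun θ => θ i) Q ∧ ∫ θ, θ i ∂Q = μ i

/-- `Q` has covariance matrix `S` around the mean `μ`. -/
def hasCov {d : ℕ} (Q : Measure (Fin d → ℝ)) (μ : Fin d → ℝ)
    (S : Matrix (Fin d) (Fin d) ℝ) : Prop :=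
  ∀ i j, Integrable (fun θ => (θ i - μ i) * (θ j - μ j)) Q ∧
    ∫ θ, (θ i - μ i) * (θ j - μ j) ∂Q = S i j

/-- Membership in the ambiguity set `𝔹`: `Q` is a Borel probability measure whose mean
vector `μ` and covariance matrix `S` exist and satisfy `𝔾((μ, S), (μ̂, Σ̂)) ≤ ρ`. -/
def inAmbiguity {d : ℕ} (μhat : Fin d → ℝ) (Shat : Matrix (Fin d) (Fin d) ℝ) (ρ : ℝ)
    (Q : Measure (Fin d → ℝ)) : Prop :=
  IsProbabilityMeasure Q ∧
    ∃ (μ : Fin d → ℝ) (S : Matrix (Fin d) (Fin d) ℝ),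
      S.PosSemidef ∧ hasMean Q μ ∧ hasCov Q μ S ∧ gelbrich μ S μhat Shat ≤ ρ

/-- Feasibility for the lower-bound semidefinite program of Theorem 1. -/
def LFeas {d J : ℕ} (x : Fin J → Fin d → ℝ) (μhat : Fin d → ℝ)
    (Shat : Matrix (Fin d) (Fin d) ℝ) (ρ : ℝ)
    (μ : Fin d → ℝ) (S C M : Matrix (Fin d) (Fin d) ℝ)
    (lam : Fin J → ℝ) (z : Fin J → Fin d → ℝ)
    (Z : Fin J → Matrix (Fin d) (Fin d) ℝ) : Prop :=
  S.PosSemidef ∧ M.PosSemidef ∧ (∀ j, (Z j).IsSymm) ∧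
  (∀ j, 0 ≤ -(x j ⬝ᵥ z j) ∧ (blk (Z j) (z j) (lam j)).PosSemidef) ∧
  (blk M μ 1 - ∑ j, blk (Z j) (z j) (lam j)).PosSemidef ∧
  (blk2 S C Cᵀ Shat).PosSemidef ∧
  (blk (M - S) μ 1).PosSemidef ∧
  (∑ i, (μhat i) ^ 2) - 2 * (μhat ⬝ᵥ μ) + (M + Shat - (2 : ℝ) • C).trace ≤ ρ ^ 2

/-- Optimal value `L⋆` of the lower-bound semidefinite program of Theorem 1. -/
noncomputable def Lstar {d J : ℕ} (x : Fin J → Fin d → ℝ) (μhat : Fin d → ℝ)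
    (Shat : Matrix (Fin d) (Fin d) ℝ) (ρ : ℝ) : ℝ :=
  sInf { v | ∃ (μ : Fin d → ℝ) (S C M : Matrix (Fin d) (Fin d) ℝ)
      (lam : Fin J → ℝ) (z : Fin J → Fin d → ℝ) (Z : Fin J → Matrix (Fin d) (Fin d) ℝ),
      LFeas x μhat Shat ρ μ S C M lam z Z ∧ v = 1 - ∑ j, lam j }


/-!
Pick `j₀` with `x_{j₀}ᵀ μ̂ < 0`. The open half-space `{θ | x_{j₀}ᵀ θ < 0}` contains `μ̂` and carries
a finitely supported law with mean `μ̂` and covariance `Σ̂`: write `Σ̂ = BᵀB`, flip the rows `b_k`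
of `B` so that `x_{j₀}ᵀ b_k ≥ 0`, and along each row put the two-point law on `μ̂ + s b_k` and
`μ̂ - t b_k` (mean `μ̂`), with `s` small enough to stay in the half-space and `s t` fixed by the
variance. This law lies in `𝔹` at Gelbrich distance `0` and gives `Θ` probability `0`.

For `L⋆`, the program is feasible with `λ = e_{j₀}`, `z_{j₀} = μ̂`, `Z_{j₀} = μ̂μ̂ᵀ`, `M = Σ̂ + μ̂μ̂ᵀ`,
`S = C = Σ̂`, of value `0`; and every feasible value `1 - ∑ λ_j` is the bottom-right entry of a
positive semidefinite matrix, hence nonnegative.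
-/
section WeightedDiracSum

variable {α ι : Type*} [MeasurableSpace α] [Fintype ι]

def weightedDiracSum (w : ι → ℝ) (pt : ι → α) : Measure α :=
  ∑ k, ENNReal.ofReal (w k) • Measure.dirac (pt k)

lemma isProbabilityMeasure_weightedDiracSum {w : ι → ℝ} (hw : ∀ k, 0 ≤ w k)
    (hw_sum : ∑ k, w k = 1) (pt : ι → α) : IsProbabilityMeasure (weightedDiracSum w pt) := by
  constructor
  simp [weightedDiracSum, ← ENNReal.ofReal_sum_of_nonneg fun k _ => hw k, hw_sum]

variable [MeasurableSingletonClass α]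

lemma weightedDiracSum_eq_zero {S : Set α} (w : ι → ℝ) {pt : ι → α} (h : ∀ k, pt k ∉ S) :
    weightedDiracSum w pt S = 0 := by
  simp [weightedDiracSum, Measure.dirac_apply, h]

lemma integrable_weightedDiracSum (w : ι → ℝ) (pt : ι → α) (f : α → ℝ) :
    Integrable f (weightedDiracSum w pt) :=
  integrable_finsetSum_measure.2 fun _ _ =>
    (integrable_dirac (by simp)).smul_measure ENNReal.ofReal_ne_top

lemma integral_weightedDiracSum {w : ι → ℝ} (hw : ∀ k, 0 ≤ w k) (pt : ι → α) (f : α → ℝ) :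
    ∫ a, f a ∂(weightedDiracSum w pt) = ∑ k, w k * f (pt k) := by
  rw [weightedDiracSum, integral_finsetSum_measure fun _ _ =>
    (integrable_dirac (by simp)).smul_measure ENNReal.ofReal_ne_top]
  simp [integral_smul_measure, ENNReal.toReal_ofReal (hw _)]

end WeightedDiracSum

section HalfSpaceLaw

variable {d : ℕ} {ι : Type*} [Fintype ι]

def twoPointMixture (μ : Fin d → ℝ) (B : Matrix ι (Fin d) ℝ) (s t : ℝ) :
    Measure (Fin d → ℝ) :=
  weightedDiracSum (fun p : ι × Bool => (if p.2 then t else s) / (Fintype.card ι * (s + t)))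
    (fun p => μ + (if p.2 then s else -t) • B p.1)

variable [Nonempty ι]

lemma hasMean_hasCov_twoPointMixture (μ : Fin d → ℝ) (B : Matrix ι (Fin d) ℝ) {s t : ℝ}
    (hs : 0 < s) (ht : 0 < t) (hst : s * t = Fintype.card ι) :
    IsProbabilityMeasure (twoPointMixture μ B s t) ∧ hasMean (twoPointMixture μ B s t) μ ∧
      hasCov (twoPointMixture μ B s t) μ (Bᵀ * B) := by
  set w : ι × Bool → ℝ := fun p => (if p.2 then t else s) / (Fintype.card ι * (s + t))
  set pt : ι × Bool → Fin d → ℝ := fun p => μ + (if p.2 then s else -t) • B p.1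
  rw [show twoPointMixture μ B s t = weightedDiracSum w pt from rfl]
  have hn : (0 : ℝ) < Fintype.card ι := by exact_mod_cast Fintype.card_pos
  have hw : ∀ p, 0 ≤ w p := fun p => by positivity
  refine ⟨isProbabilityMeasure_weightedDiracSum hw ?_ pt,
    fun i => ⟨integrable_weightedDiracSum w pt _, ?_⟩,
    fun i j => ⟨integrable_weightedDiracSum w pt _, ?_⟩⟩
  · simp only [w, Fintype.sum_prod_type, Fintype.sum_bool, if_true, Bool.false_eq_true, if_false,
      Finset.sum_const, Finset.card_univ, nsmul_eq_mul]
    field_simp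
    ring
  · rw [integral_weightedDiracSum hw]
    simp only [w, pt, Fintype.sum_prod_type, Fintype.sum_bool, if_true, Bool.false_eq_true,
      if_false, Pi.add_apply, Pi.smul_apply, smul_eq_mul]
    have hrow : ∀ k, t / (Fintype.card ι * (s + t)) * (μ i + s * B k i) +
        s / (Fintype.card ι * (s + t)) * (μ i + -t * B k i) = μ i / Fintype.card ι := by
      intro k; field_simp; ring
    simp only [hrow, Finset.sum_const, Finset.card_univ, nsmul_eq_mul]
    field_simp
  · rw [integral_weightedDiracSum hw, mul_apply]
    simp only [w, pt, Fintype.sum_prod_type, Fintype.sum_bool, if_true, Bool.false_eq_true,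
      if_false, Pi.add_apply, Pi.smul_apply, smul_eq_mul, add_sub_cancel_left, transpose_apply]
    refine Finset.sum_congr rfl fun k _ => ?_
    rw [← hst]
    field_simp

lemma exists_hasMean_hasCov_halfSpace_null {μ u : Fin d → ℝ}
    (hu : u ⬝ᵥ μ < 0) (B : Matrix ι (Fin d) ℝ) :
    ∃ Q : Measure (Fin d → ℝ), IsProbabilityMeasure Q ∧ hasMean Q μ ∧ hasCov Q μ (Bᵀ * B) ∧
      Q {θ | 0 ≤ u ⬝ᵥ θ} = 0 := by
  set B' : Matrix ι (Fin d) ℝ := of fun k => if 0 ≤ u ⬝ᵥ B k then B k else -B k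
  have hB' : B'ᵀ * B' = Bᵀ * B := by
    ext i j
    simp only [Matrix.mul_apply, transpose_apply, B', of_apply]
    refine Finset.sum_congr rfl fun k _ => ?_
    split_ifs <;> simp
  have huB' : ∀ k, u ⬝ᵥ B' k = |u ⬝ᵥ B k| := fun k => by
    change u ⬝ᵥ (if 0 ≤ u ⬝ᵥ B k then B k else -B k) = _
    split_ifs with h
    · exact (abs_of_nonneg h).symm
    · rw [dotProduct_neg, abs_of_neg (not_le.1 h)]
  set c := 1 + ∑ k, |u ⬝ᵥ B k|
  have hc : 0 < c := by positivity
  set s := -(u ⬝ᵥ μ) / c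
  have hs : 0 < s := div_pos (neg_pos.2 hu) hc
  set t := Fintype.card ι / s
  have ht : 0 < t := div_pos (by exact_mod_cast Fintype.card_pos) hs
  have hst : s * t = Fintype.card ι := mul_div_cancel₀ _ hs.ne'
  obtain ⟨hQ, hmean, hcov⟩ := hasMean_hasCov_twoPointMixture μ B' hs ht hst
  refine ⟨_, hQ, hmean, hB' ▸ hcov, weightedDiracSum_eq_zero _ fun ⟨k, b⟩ => ?_⟩
  have hk : s * |u ⬝ᵥ B k| < -(u ⬝ᵥ μ) := by
    have : |u ⬝ᵥ B k| < c := by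
      have := Finset.single_le_sum (f := fun k => |u ⬝ᵥ B k|) (fun k _ => abs_nonneg _)
        (Finset.mem_univ k)
      linarith
    calc s * |u ⬝ᵥ B k| < s * c := mul_lt_mul_of_pos_left this hs
      _ = -(u ⬝ᵥ μ) := div_mul_cancel₀ _ hc.ne'
  have : 0 ≤ t * |u ⬝ᵥ B k| := mul_nonneg ht.le (abs_nonneg _)
  cases b <;> simp [dotProduct_add, dotProduct_smul, huB'] <;> linarith

end HalfSpaceLaw

section MatSqrt

variable {d : ℕ} {A : Matrix (Fin d) (Fin d) ℝ}

lemma matSqrt_eq_cfc (hA : A.PosSemidef) : matSqrt A = cfc Real.sqrt A := by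
  rw [matSqrt, dif_pos hA, hA.1.cfc_eq, IsHermitian.cfc, Unitary.conjStarAlgAut_apply]
  rfl

lemma transpose_matSqrt (hA : A.PosSemidef) : (matSqrt A)ᵀ = matSqrt A := by
  rw [matSqrt_eq_cfc hA]
  exact (cfc_predicate Real.sqrt A : (cfc Real.sqrt A).IsHermitian)

lemma matSqrt_mul_self (hA : A.PosSemidef) : matSqrt A * matSqrt A = A := by
  rw [matSqrt_eq_cfc hA, ← cfc_mul Real.sqrt Real.sqrt A]
  conv_rhs => rw [← cfc_id' ℝ A (ha := hA.1.isSelfAdjoint)]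
  exact cfc_congr fun x hx =>
    Real.mul_self_sqrt ((posSemidef_iff_isHermitian_and_spectrum_nonneg.1 hA).2 hx)

lemma matSqrt_matSqrt_mul_mul_matSqrt (hA : A.PosSemidef) :
    matSqrt (matSqrt A * A * matSqrt A) = A := by
  have hpsd : (matSqrt A * A * matSqrt A).PosSemidef := by
    simpa [conjTranspose_eq_transpose_of_trivial, transpose_matSqrt hA] using
      hA.conjTranspose_mul_mul_same (matSqrt A)
  have hcfc : matSqrt A * A * matSqrt A = cfc (fun x => √x * x * √x) A := by
    rw [cfc_mul (fun x => √x * x) Real.sqrt A, cfc_mul Real.sqrt (fun x => x) A,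
      cfc_id' ℝ A hA.1.isSelfAdjoint, matSqrt_eq_cfc hA]
  rw [matSqrt_eq_cfc hpsd, hcfc,
    ← cfc_comp Real.sqrt (fun x => √x * x * √x) A hA.1.isSelfAdjoint]
  conv_rhs => rw [← cfc_id' ℝ A (ha := hA.1.isSelfAdjoint)]
  refine cfc_congr fun x hx => ?_
  have hx0 := (posSemidef_iff_isHermitian_and_spectrum_nonneg.1 hA).2 hx
  rw [Function.comp_apply, mul_comm √x x, mul_assoc, Real.mul_self_sqrt hx0,
    Real.sqrt_mul_self hx0]

lemma gelbrich_self (μ : Fin d → ℝ) (hA : A.PosSemidef) : gelbrich μ A μ A = 0 := by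
  rw [gelbrich, matSqrt_matSqrt_mul_mul_matSqrt hA, two_smul, sub_self]
  simp

end MatSqrt

section LowerBoundProgram

variable {d J : ℕ}

lemma blk_zero : blk (0 : Matrix (Fin d) (Fin d) ℝ) 0 0 = 0 := by
  ext (i | _) (j | _) <;> rfl

lemma posSemidef_blk_vecMulVec_self (w : Fin d → ℝ) : (blk (vecMulVec w w) w 1).PosSemidef := by
  have : blk (vecMulVec w w) w 1 = vecMulVec (Sum.elim w 1) (star (Sum.elim w 1)) := by
    ext (i | _) (j | _) <;> simp [blk, vecMulVec_apply]
  rw [this]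
  exact posSemidef_vecMulVec_self_star _

lemma posSemidef_blk_zero_zero {A : Matrix (Fin d) (Fin d) ℝ} (hA : A.PosSemidef) :
    (blk A 0 0).PosSemidef := by
  set K : Matrix (Fin d) (Fin d ⊕ Unit) ℝ := fromCols 1 0
  have : blk A 0 0 = Kᴴ * A * K := by
    have hblk : blk A 0 0 = fromBlocks A 0 0 0 := by ext (i | _) (j | _) <;> rfl
    rw [hblk, conjTranspose_fromCols_eq_fromRows_conjTranspose, fromRows_mul,
      fromRows_mul_fromCols]
    simp
  rw [this]
  exact hA.conjTranspose_mul_mul_same _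

lemma posSemidef_blk2_self {A : Matrix (Fin d) (Fin d) ℝ} (hA : A.PosSemidef) :
    (blk2 A A Aᵀ A).PosSemidef := by
  have : blk2 A A Aᵀ A = A.submatrix (Sum.elim id id) (Sum.elim id id) := by
    rw [← conjTranspose_eq_transpose_of_trivial, hA.1.eq]
    ext (i | i) (j | j) <;> rfl
  rw [this]
  exact hA.submatrix _

lemma exists_LFeas_sum_eq_one (x : Fin J → Fin d → ℝ) {μhat : Fin d → ℝ}
    {Shat : Matrix (Fin d) (Fin d) ℝ} (hShat : Shat.PosSemidef) (ρ : ℝ) {j₀ : Fin J}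
    (hj₀ : x j₀ ⬝ᵥ μhat ≤ 0) :
    ∃ (μ : Fin d → ℝ) (S C M : Matrix (Fin d) (Fin d) ℝ)
      (lam : Fin J → ℝ) (z : Fin J → Fin d → ℝ) (Z : Fin J → Matrix (Fin d) (Fin d) ℝ),
      LFeas x μhat Shat ρ μ S C M lam z Z ∧ ∑ j, lam j = 1 := by
  set V := vecMulVec μhat μhat
  have hV : V.PosSemidef := by simpa using posSemidef_vecMulVec_self_star μhat
  set lam : Fin J → ℝ := Pi.single j₀ 1
  set z : Fin J → Fin d → ℝ := Pi.single j₀ μhat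
  set Z : Fin J → Matrix (Fin d) (Fin d) ℝ := Pi.single j₀ V
  have hblk : ∀ j, blk (Z j) (z j) (lam j) =
      (Pi.single j₀ (blk V μhat 1) : Fin J → Matrix (Fin d ⊕ Unit) (Fin d ⊕ Unit) ℝ) j := by
    intro j
    by_cases h : j = j₀
    · subst h; simp [lam, z, Z]
    · simp [h, lam, z, Z, blk_zero]
  refine ⟨μhat, Shat, Shat, Shat + V, lam, z, Z,
    ⟨hShat, hShat.add hV, fun j => ?_, fun j => ?_, ?_, posSemidef_blk2_self hShat, ?_, ?_⟩,
    by simp [lam]⟩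
  · by_cases h : j = j₀
    · subst h; simpa [Z, IsSymm, ← conjTranspose_eq_transpose_of_trivial] using hV.1.eq
    · simp [Z, h, isSymm_zero]
  · rw [hblk]
    by_cases h : j = j₀
    · subst h; simpa [z] using ⟨hj₀, posSemidef_blk_vecMulVec_self μhat⟩
    · simpa [z, h] using PosSemidef.zero
  · have : blk (Shat + V) μhat 1 - blk V μhat 1 = blk Shat 0 0 := by
      ext (i | _) (j | _) <;> simp [blk]
    rw [Finset.sum_congr rfl fun j _ => hblk j, Finset.sum_pi_single', if_pos (Finset.mem_univ _),
      this]
    exact posSemidef_blk_zero_zero hShat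
  · simpa using posSemidef_blk_vecMulVec_self μhat
  · have : Shat + V + Shat - (2 : ℝ) • Shat = V := by rw [two_smul]; abel
    rw [this, trace_vecMulVec]
    simp only [dotProduct, ← sq]
    linarith [sq_nonneg ρ]

lemma one_sub_sum_nonneg_of_LFeas {x : Fin J → Fin d → ℝ} {μhat : Fin d → ℝ}
    {Shat : Matrix (Fin d) (Fin d) ℝ} {ρ : ℝ} {μ : Fin d → ℝ}
    {S C M : Matrix (Fin d) (Fin d) ℝ} {lam : Fin J → ℝ} {z : Fin J → Fin d → ℝ}
    {Z : Fin J → Matrix (Fin d) (Fin d) ℝ}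
    (h : LFeas x μhat Shat ρ μ S C M lam z Z) : 0 ≤ 1 - ∑ j, lam j := by
  simpa [blk, Matrix.sum_apply] using h.2.2.2.2.1.diag_nonneg (i := Sum.inr ())

end LowerBoundProgram

theorem lower_bound_trivial_general {d J : ℕ}
    (x : Fin J → Fin d → ℝ) (ρ : ℝ) (hρ : 0 ≤ ρ) (μhat : Fin d → ℝ)
    (Shat : Matrix (Fin d) (Fin d) ℝ) (hShat : Shat.PosDef)
    (hμ : μhat ∉ favSet x) :
    sInf { p | ∃ Q : Measure (Fin d → ℝ), inAmbiguity μhat Shat ρ Q ∧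
        p = (Q (favSet x)).toReal } = 0 ∧
    Lstar x μhat Shat ρ = 0 := by
  obtain ⟨j₀, hj₀⟩ : ∃ j, x j ⬝ᵥ μhat < 0 := by simpa [favSet] using hμ
  have hS := hShat.posSemidef
  obtain ⟨i, -⟩ := Finset.exists_ne_zero_of_sum_ne_zero hj₀.ne
  have : Nonempty (Fin d) := ⟨i⟩
  obtain ⟨Q, hQ, hmean, hcov, hQ_half⟩ := exists_hasMean_hasCov_halfSpace_null hj₀ (matSqrt Shat)
  rw [transpose_matSqrt hS, matSqrt_mul_self hS] at hcov
  constructor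
  · refine IsLeast.csInf_eq ⟨⟨Q, ⟨hQ, μhat, Shat, hS, hmean, hcov, ?_⟩, ?_⟩, ?_⟩
    · rw [gelbrich_self μhat hS]
      exact hρ
    · rw [measure_mono_null (fun θ (hθ : θ ∈ favSet x) => hθ j₀) hQ_half, ENNReal.toReal_zero]
    · rintro _ ⟨_, _, rfl⟩
      exact ENNReal.toReal_nonneg
  · obtain ⟨μ, S, C, M, lam, z, Z, hfeas, hlam⟩ := exists_LFeas_sum_eq_one x hS ρ hj₀.le
    refine IsLeast.csInf_eq ⟨⟨μ, S, C, M, lam, z, Z, hfeas, by rw [hlam, sub_self]⟩, ?_⟩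
    rintro _ ⟨_, _, _, _, _, _, _, hf, rfl⟩
    exact one_sub_sum_nonneg_of_LFeas hf

/-- **Proposition 1 (ii).** If `μ̂ ∉ Θ({x_j})`, then the worst-case lower bound on the
probability of validity is trivial: the infimum equals `0`, and consequently the
semidefinite-programming lower bound `L⋆` equals `0`. -/
theorem lower_bound_trivial {d J : ℕ} (hd : 1 ≤ d) (hJ : 1 ≤ J)
    (x : Fin J → Fin d → ℝ) (ρ : ℝ) (hρ : 0 ≤ ρ) (μhat : Fin d → ℝ)
    (Shat : Matrix (Fin d) (Fin d) ℝ) (hShat : Shat.PosDef)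
    (hμ : μhat ∉ favSet x) :
    sInf { p | ∃ Q : Measure (Fin d → ℝ), inAmbiguity μhat Shat ρ Q ∧
        p = (Q (favSet x)).toReal } = 0 ∧
    Lstar x μhat Shat ρ = 0 :=
  lower_bound_trivial_general x ρ hρ μhat Shat hShat hμ

end
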